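/- Let A be a Hermitian n×n matrix with spectral decomposition A = U* Λ U (U unitary, Λ = diag{λ_1,...,λ_n} real). Then the unique minimizer of ‖X - A‖_F over positive semidefinite Hermitian X is U* diag{max(λ_1,0),...,max(λ_n,0)} U. -/

import Mathlib

open Matrix
open scoped ComplexOrder

noncomputable section

/-- Frobenius norm of a complex matrix. -/
def frobNorm {α : Type*} [Fintype α] (M : Matrix α α ℂ) : ℝ :=
  Real.sqrt (∑ i, ∑ j, ‖M i j‖ ^ 2)

/-!
Conjugation by the unitary `U` preserves the Frobenius norm, so it suffices to treat
`A = Λ = diagonal λ` and `B = D = diagonal λ⁺`. If `Y` has real nonnegative diagonal entries,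
then entrywise `‖Y - Λ‖² ≥ ‖Y - D‖² + ‖D - Λ‖²`: off the diagonal `D - Λ` vanishes, and on it
`(r - λ)² = (r - λ⁺)² + (λ⁺ - λ)² + 2 r λ⁻` with `r ≥ 0`. This Pythagorean inequality gives
minimality of `D`, and at equality it forces `‖Y - D‖ = 0`, hence uniqueness.
-/

lemma sq_sub_max_zero_add_sq_le {r l : ℝ} (hr : 0 ≤ r) :
    (r - max l 0) ^ 2 + (max l 0 - l) ^ 2 ≤ (r - l) ^ 2 := by
  rcases le_total l 0 with hl | hl
  · rw [max_eq_right hl]; nlinarith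
  · rw [max_eq_left hl]; nlinarith

section FrobNorm

variable {ι : Type*} [Fintype ι]

lemma frobNorm_nonneg (M : Matrix ι ι ℂ) : 0 ≤ frobNorm M :=
  Real.sqrt_nonneg _

lemma frobNorm_sq (M : Matrix ι ι ℂ) : frobNorm M ^ 2 = ∑ i, ∑ j, ‖M i j‖ ^ 2 :=
  Real.sq_sqrt (by positivity)

lemma ofReal_frobNorm_sq (M : Matrix ι ι ℂ) : ((frobNorm M ^ 2 : ℝ) : ℂ) = (Mᴴ * M).trace := by
  rw [frobNorm_sq, Finset.sum_comm]
  push_cast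
  refine Finset.sum_congr rfl fun j _ => Finset.sum_congr rfl fun i _ => ?_
  rw [← Complex.conj_mul']
  rfl

lemma frobNorm_eq_zero_iff {M : Matrix ι ι ℂ} : frobNorm M = 0 ↔ M = 0 := by
  rw [← trace_conjTranspose_mul_self_eq_zero_iff, ← ofReal_frobNorm_sq, Complex.ofReal_eq_zero,
    pow_eq_zero_iff two_ne_zero]

lemma frobNorm_conjTranspose_mul_mul [DecidableEq ι] {U : Matrix ι ι ℂ} (hU : U ∈ unitaryGroup ι ℂ)
    (M : Matrix ι ι ℂ) : frobNorm (Uᴴ * M * U) = frobNorm M := by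
  have hUU : U * Uᴴ = 1 := mem_unitaryGroup_iff.mp hU
  refine (sq_eq_sq₀ (frobNorm_nonneg _) (frobNorm_nonneg _)).mp (Complex.ofReal_injective ?_)
  rw [ofReal_frobNorm_sq, ofReal_frobNorm_sq, conjTranspose_mul, conjTranspose_mul,
    conjTranspose_conjTranspose]
  calc (Uᴴ * (Mᴴ * U) * (Uᴴ * M * U)).trace = (Uᴴ * (Mᴴ * (U * Uᴴ) * M) * U).trace := by
        simp only [Matrix.mul_assoc]
    _ = (Mᴴ * M).trace := by
        rw [hUU, Matrix.mul_one, trace_mul_cycle, ← Matrix.mul_assoc, hUU, Matrix.one_mul]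

lemma frobNorm_sub_conjTranspose_mul_mul [DecidableEq ι] {U : Matrix ι ι ℂ}
    (hU : U ∈ unitaryGroup ι ℂ) (X M : Matrix ι ι ℂ) : frobNorm (X - Uᴴ * M * U) = frobNorm (U * X * Uᴴ - M) := by
  have hUU : Uᴴ * U = 1 := mem_unitaryGroup_iff'.mp hU
  have hX : X = Uᴴ * (U * X * Uᴴ) * U := by
    simp only [← Matrix.mul_assoc, hUU, Matrix.one_mul]
    rw [Matrix.mul_assoc, hUU, Matrix.mul_one]
  conv_lhs => rw [hX, ← Matrix.sub_mul, ← Matrix.mul_sub]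
  exact frobNorm_conjTranspose_mul_mul hU _

lemma frobNorm_sq_add_le_of_diag_nonneg [DecidableEq ι] {Y : Matrix ι ι ℂ} (hY : ∀ i, 0 ≤ Y i i)
    (d : ι → ℝ) :
    frobNorm (Y - diagonal fun i => ((max (d i) 0 : ℝ) : ℂ)) ^ 2 +
        frobNorm ((diagonal fun i => ((max (d i) 0 : ℝ) : ℂ)) - diagonal fun i => (d i : ℂ)) ^ 2 ≤
      frobNorm (Y - diagonal fun i => (d i : ℂ)) ^ 2 := by
  simp only [frobNorm_sq, ← Finset.sum_add_distrib]
  refine Finset.sum_le_sum fun i _ => Finset.sum_le_sum fun j _ => ?_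
  rcases eq_or_ne i j with rfl | hij
  · have hYi : Y i i = (Y i i).re := Complex.eq_re_of_ofReal_le (r := 0) (by simpa using hY i)
    simp only [Matrix.sub_apply, diagonal_apply_eq]
    rw [hYi]
    simp only [← Complex.ofReal_sub, Complex.norm_real, Real.norm_eq_abs, sq_abs]
    exact sq_sub_max_zero_add_sq_le (Complex.nonneg_iff.mp (hY i)).1
  · simp [hij]

end FrobNorm

theorem psd_projection_eq_truncated_eigenvalues_general
    (n : ℕ) (A U : Matrix (Fin n) (Fin n) ℂ) (lam : Fin n → ℝ)
    (hU₁ : U * Uᴴ = 1)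
    (hA : A = Uᴴ * Matrix.diagonal (fun i => ((lam i : ℝ) : ℂ)) * U) :
    (Uᴴ * Matrix.diagonal (fun i => ((max (lam i) 0 : ℝ) : ℂ)) * U).PosSemidef ∧
    (∀ X : Matrix (Fin n) (Fin n) ℂ, X.PosSemidef →
      frobNorm ((Uᴴ * Matrix.diagonal (fun i => ((max (lam i) 0 : ℝ) : ℂ)) * U) - A) ≤
        frobNorm (X - A)) ∧
    (∀ X : Matrix (Fin n) (Fin n) ℂ, X.PosSemidef →
      frobNorm (X - A) =
        frobNorm ((Uᴴ * Matrix.diagonal (fun i => ((max (lam i) 0 : ℝ) : ℂ)) * U) - A) →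
      X = Uᴴ * Matrix.diagonal (fun i => ((max (lam i) 0 : ℝ) : ℂ)) * U) := by
  have hU : U ∈ unitaryGroup (Fin n) ℂ := mem_unitaryGroup_iff.mpr hU₁
  have pythagoras : ∀ X : Matrix (Fin n) (Fin n) ℂ, X.PosSemidef →
      frobNorm (X - Uᴴ * diagonal (fun i => ((max (lam i) 0 : ℝ) : ℂ)) * U) ^ 2 +
          frobNorm (Uᴴ * diagonal (fun i => ((max (lam i) 0 : ℝ) : ℂ)) * U - A) ^ 2 ≤
        frobNorm (X - A) ^ 2 := by
    intro X hX
    rw [hA, ← Matrix.sub_mul, ← Matrix.mul_sub, frobNorm_conjTranspose_mul_mul hU,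
      frobNorm_sub_conjTranspose_mul_mul hU, frobNorm_sub_conjTranspose_mul_mul hU]
    exact frobNorm_sq_add_le_of_diag_nonneg
      (fun _ => (hX.mul_mul_conjTranspose_same U).diag_nonneg) lam
  refine ⟨?_, fun X hX => ?_, fun X hX hXA => ?_⟩
  · exact (PosSemidef.diagonal fun i => Complex.zero_le_real.mpr (le_max_right (lam i) 0)
      ).conjTranspose_mul_mul_same U
  · refine (pow_le_pow_iff_left₀ (frobNorm_nonneg _) (frobNorm_nonneg _) two_ne_zero).mp ?_
    exact (le_add_of_nonneg_left (sq_nonneg _)).trans (pythagoras X hX)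
  · have hXB : frobNorm (X - Uᴴ * diagonal (fun i => ((max (lam i) 0 : ℝ) : ℂ)) * U) ^ 2 ≤ 0 := by
      linarith [hXA ▸ pythagoras X hX]
    exact sub_eq_zero.mp (frobNorm_eq_zero_iff.mp (pow_eq_zero_iff two_ne_zero |>.mp
      (le_antisymm hXB (sq_nonneg _))))

/-- let A be Hermitian with spectral decomposition A = U* Λ U
(U unitary, Λ = diag{λ_1,...,λ_n} real). Then the unique minimizer of ‖X - A‖_F
over positive semidefinite (Hermitian) X is U* diag{max(λ_i,0)} U. -/
theorem psd_projection_eq_truncated_eigenvalues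
    (n : ℕ) (A U : Matrix (Fin n) (Fin n) ℂ) (lam : Fin n → ℝ)
    (hU₁ : U * Uᴴ = 1) (hU₂ : Uᴴ * U = 1)
    (hA : A = Uᴴ * Matrix.diagonal (fun i => ((lam i : ℝ) : ℂ)) * U) :
    (Uᴴ * Matrix.diagonal (fun i => ((max (lam i) 0 : ℝ) : ℂ)) * U).PosSemidef ∧
    (∀ X : Matrix (Fin n) (Fin n) ℂ, X.PosSemidef →
      frobNorm ((Uᴴ * Matrix.diagonal (fun i => ((max (lam i) 0 : ℝ) : ℂ)) * U) - A) ≤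
        frobNorm (X - A)) ∧
    (∀ X : Matrix (Fin n) (Fin n) ℂ, X.PosSemidef →
      frobNorm (X - A) =
        frobNorm ((Uᴴ * Matrix.diagonal (fun i => ((max (lam i) 0 : ℝ) : ℂ)) * U) - A) →
      X = Uᴴ * Matrix.diagonal (fun i => ((max (lam i) 0 : ℝ) : ℂ)) * U) :=
  psd_projection_eq_truncated_eigenvalues_general n A U lam hU₁ hA
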